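/- Let (B_n)_{n∈ℤ} and (C_n)_{n∈ℤ} be complex sequences, let κ > 1 be real, and assume ∑_{n∈ℤ}|B_n| κ^{|n|} < ∞ and ∑_{n∈ℤ}|C_n| κ^{|n|} < ∞. Let f^{LT} and f^{TL} be the far-field functions of (B_n) and (C_n), and let G(θ) = f^{LT}(θ) f^{TL}(−θ) + f^{TL}(θ) f^{LT}(−θ). Then the limit as N → ∞ of (κ^N/π)·∫₀^{π} G(θ)·(κ cos((N−1)θ) − cos(Nθ))/(1 − 2κ cos θ + κ²) dθ exists and equals ∑_{m,n∈ℤ} κ^{−|m−n|} B_m C_n + ∑_{m,n∈ℤ} κ^{|m−n|} B_m C_n. (Second identity of Lemma 1; note the limit cannot be interchanged with the integral.) -/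

import Mathlib

/-!
For `κ > 1` the kernel `K_N(θ) = κ^N (κ cos((N-1)θ) - cos(Nθ)) / (1 - 2κ cos θ + κ²)`
(`cosKernel κ N`) is the real part of `(κe^{iθ})^N / (κe^{iθ} - 1) = ∑_{j < N} (κe^{iθ})^j`, so
`K_N(θ) = ∑_{j < N} κ^j cos(jθ)`, a series over all integers `j < N` that converges uniformly in
`θ`. Expanding `G(θ) = ∑_{m,n} B_m C_n · 2cos((m-n)θ)` and integrating term by term over `[0, π]`,
orthogonality of the cosines turns the `N`-th expression into `∑_{m,n} w_N(m-n) B_m C_n` with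
`w_N(k) = κ^k [k < N] + κ^{-k} [-k < N]` (`cosKernelCoeff κ N k`). These weights equal
`κ^k + κ^{-k} = κ^{-|k|} + κ^{|k|}` once `N > |k|`, and are bounded by `2κ^{|k|} ≤ 2κ^{|m|}κ^{|n|}`,
so dominated convergence for series gives the limit.
-/

open scoped Real
open Filter

/-- The far-field function of an absolutely summable sequence `a : ℤ → ℂ`:
`f(θ) = ∑_{n ∈ ℤ} a n · e^{i n θ}`. -/
noncomputable def farField (a : ℤ → ℂ) (θ : ℝ) : ℂ :=
  ∑' n : ℤ, a n * Complex.exp ((n : ℂ) * θ * Complex.I)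

open Complex intervalIntegral

theorem hasSum_intervalIntegral_of_norm_le {ι E : Type*} [Countable ι] [NormedAddCommGroup E]
    [NormedSpace ℝ E] {F : ι → ℝ → E} {f : ℝ → E} {c : ι → ℝ} {a b : ℝ}
    (hF : ∀ i, Continuous (F i)) (hFc : ∀ i t, ‖F i t‖ ≤ c i) (hc : Summable c)
    (hFf : ∀ t, HasSum (fun i => F i t) (f t)) :
    HasSum (fun i => ∫ t in a..b, F i t) (∫ t in a..b, f t) :=
  hasSum_integral_of_dominated_convergence (fun i _ => c i)
    (fun i => (hF i).aestronglyMeasurable) (fun i => .of_forall fun t _ => hFc i t)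
    (.of_forall fun _ _ => hc) intervalIntegrable_const (.of_forall fun t _ => hFf t)

theorem hasSum_zpow_sub_of_one_lt_norm {K : Type*} [NormedField K] [CompleteSpace K] {a : K}
    (ha : 1 < ‖a‖) (N : ℕ) :
    HasSum (fun i : ℕ => a ^ ((N : ℤ) - 1 - i)) (a ^ N / (a - 1)) := by
  have ha0 : a ≠ 0 := norm_pos_iff.mp (one_pos.trans ha)
  have ha1 : a - 1 ≠ 0 := sub_ne_zero.mpr fun h => by simp [h] at ha
  have hgeom := (hasSum_geometric_of_norm_lt_one (ξ := a⁻¹) (by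
    rw [norm_inv]; exact inv_lt_one_of_one_lt₀ ha)).mul_left (a ^ ((N : ℤ) - 1))
  have hsum : a ^ ((N : ℤ) - 1) * (1 - a⁻¹)⁻¹ = a ^ N / (a - 1) := by
    rw [zpow_sub_one₀ ha0, zpow_natCast]
    field_simp
  rw [← hsum]
  refine hgeom.congr_fun fun i => ?_
  rw [inv_pow, ← zpow_natCast a i, ← zpow_neg, ← zpow_add₀ ha0, sub_eq_add_neg]

theorem sub_one_sq_le_one_sub_two_mul_cos_add_sq {κ : ℝ} (hκ : 0 ≤ κ) (θ : ℝ) :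
    (κ - 1) ^ 2 ≤ 1 - 2 * κ * Real.cos θ + κ ^ 2 := by
  nlinarith [Real.cos_le_one θ]

noncomputable def cosKernel (κ : ℝ) (N : ℕ) (θ : ℝ) : ℝ :=
  κ ^ N * ((κ * Real.cos (((N : ℝ) - 1) * θ) - Real.cos ((N : ℝ) * θ))
    / (1 - 2 * κ * Real.cos θ + κ ^ 2))

theorem re_pow_div_sub_one_eq_cosKernel (κ θ : ℝ) (N : ℕ) :
    (((κ : ℂ) * exp (θ * I)) ^ N / ((κ : ℂ) * exp (θ * I) - 1)).re = cosKernel κ N θ := by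
  have hnormSq : normSq ((κ : ℂ) * exp (θ * I) - 1) = 1 - 2 * κ * Real.cos θ + κ ^ 2 := by
    rw [normSq_apply]
    simp only [sub_re, sub_im, re_ofReal_mul, im_ofReal_mul, exp_ofReal_mul_I_re,
      exp_ofReal_mul_I_im, one_re, one_im]
    nlinarith [Real.sin_sq_add_cos_sq θ]
  have hnum : ((κ : ℂ) * exp (θ * I)) ^ N * (starRingEnd ℂ) ((κ : ℂ) * exp (θ * I) - 1)
      = (κ : ℂ) ^ N * (κ * exp ((((N : ℝ) - 1) * θ : ℝ) * I) - exp (((N : ℝ) * θ : ℝ) * I)) := by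
    rw [map_sub, map_mul, conj_ofReal, ← exp_conj, map_mul, conj_ofReal, conj_I, map_one,
      mul_pow, ← exp_nat_mul, mul_assoc, mul_sub, mul_one, mul_left_comm, ← exp_add]
    push_cast
    ring_nf
  rw [div_eq_mul_inv, inv_def, ← mul_assoc, hnum, hnormSq, re_mul_ofReal, ← ofReal_pow,
    re_ofReal_mul, sub_re, re_ofReal_mul, exp_ofReal_mul_I_re, exp_ofReal_mul_I_re, cosKernel]
  ring

theorem re_ofReal_mul_exp_zpow (κ θ : ℝ) (j : ℤ) :
    (((κ : ℂ) * exp (θ * I)) ^ j).re = κ ^ j * Real.cos (j * θ) := by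
  rw [mul_zpow, ← ofReal_zpow, ← exp_int_mul, re_ofReal_mul, ← mul_assoc,
    ← ofReal_intCast, ← ofReal_mul, exp_ofReal_mul_I_re]

theorem hasSum_cosKernel {κ : ℝ} (hκ : 1 < κ) (N : ℕ) (θ : ℝ) :
    HasSum (fun i : ℕ => κ ^ ((N : ℤ) - 1 - i) * Real.cos ((((N : ℤ) - 1 - i : ℤ) : ℝ) * θ))
      (cosKernel κ N θ) := by
  have hnorm : 1 < ‖(κ : ℂ) * exp (θ * I)‖ := by
    rwa [norm_mul, norm_exp_ofReal_mul_I, mul_one, norm_real, Real.norm_of_nonneg (by linarith)]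
  simpa only [re_ofReal_mul_exp_zpow, re_pow_div_sub_one_eq_cosKernel] using
    hasSum_re (hasSum_zpow_sub_of_one_lt_norm hnorm N)

theorem abs_cosKernel_le {κ : ℝ} (hκ : 1 < κ) (N : ℕ) (θ : ℝ) :
    |cosKernel κ N θ| ≤ κ ^ N * ((κ + 1) / (κ - 1) ^ 2) := by
  have hden := sub_one_sq_le_one_sub_two_mul_cos_add_sq (by linarith : (0 : ℝ) ≤ κ) θ
  have hpos : 0 < (κ - 1) ^ 2 := by nlinarith
  rw [cosKernel, abs_mul, abs_of_pos (by positivity), abs_div, abs_of_pos (hpos.trans_le hden)]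
  gcongr
  calc |κ * Real.cos (((N : ℝ) - 1) * θ) - Real.cos ((N : ℝ) * θ)|
      ≤ |κ * Real.cos (((N : ℝ) - 1) * θ)| + |Real.cos ((N : ℝ) * θ)| := abs_sub _ _
    _ ≤ κ * 1 + 1 := by
      rw [abs_mul, abs_of_pos (by linarith : 0 < κ)]
      gcongr <;> exact Real.abs_cos_le_one _
    _ = κ + 1 := by ring

theorem continuous_cosKernel {κ : ℝ} (hκ : 1 < κ) (N : ℕ) : Continuous (cosKernel κ N) := by
  refine continuous_const.mul (Continuous.div (by fun_prop) (by fun_prop) fun θ => ?_)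
  have := sub_one_sq_le_one_sub_two_mul_cos_add_sq (by linarith : (0 : ℝ) ≤ κ) θ
  nlinarith

theorem integral_cos_intCast_mul (m : ℤ) :
    ∫ θ in (0 : ℝ)..π, Real.cos (m * θ) = if m = 0 then π else 0 := by
  rcases eq_or_ne m 0 with rfl | hm
  · simp
  · rw [if_neg hm, integral_comp_mul_left (fun x => Real.cos x) (Int.cast_ne_zero.mpr hm)]
    simp [integral_cos, Real.sin_int_mul_pi]

theorem integral_two_mul_cos_mul_cos (k j : ℤ) :
    ∫ θ in (0 : ℝ)..π, 2 * Real.cos (k * θ) * Real.cos (j * θ)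
      = (if j = k then π else 0) + (if j = -k then π else 0) := by
  have hprod : ∀ θ : ℝ, 2 * Real.cos (k * θ) * Real.cos (j * θ)
      = Real.cos (((k + j : ℤ) : ℝ) * θ) + Real.cos (((k - j : ℤ) : ℝ) * θ) := fun θ => by
    push_cast
    rw [add_mul, sub_mul, Real.cos_add, Real.cos_sub]
    ring
  simp_rw [hprod]
  rw [integral_add (Continuous.intervalIntegrable (by fun_prop) _ _)
    (Continuous.intervalIntegrable (by fun_prop) _ _), integral_cos_intCast_mul,
    integral_cos_intCast_mul]
  simp only [add_eq_zero_iff_eq_neg', sub_eq_zero, eq_comm (a := k)]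
  ring

theorem hasSum_ite_sub_eq {M : Type*} [AddCommMonoid M] [TopologicalSpace M] (N : ℕ) (k : ℤ)
    (v : M) :
    HasSum (fun i : ℕ => if (N : ℤ) - 1 - i = k then v else 0) (if k < N then v else 0) := by
  by_cases hk : k < N
  · rw [if_pos hk]
    convert hasSum_ite_eq ((N : ℤ) - 1 - k).toNat v using 2 with i
    congr 1
    exact propext (by omega)
  · rw [if_neg hk]
    exact hasSum_zero.congr_fun fun i => if_neg (by omega)

noncomputable def cosKernelCoeff (κ : ℝ) (N : ℕ) (k : ℤ) : ℝ :=
  (if k < N then κ ^ k else 0) + (if -k < N then κ ^ (-k) else 0)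

theorem integral_two_mul_cos_mul_cosKernel {κ : ℝ} (hκ : 1 < κ) (N : ℕ) (k : ℤ) :
    ∫ θ in (0 : ℝ)..π, 2 * Real.cos (k * θ) * cosKernel κ N θ = π * cosKernelCoeff κ N k := by
  set j : ℕ → ℤ := fun i => (N : ℤ) - 1 - i
  have hgeom : HasSum (fun i => κ ^ j i) (κ ^ N / (κ - 1)) :=
    hasSum_zpow_sub_of_one_lt_norm (by rwa [Real.norm_of_nonneg (by linarith)]) N
  have hseries := hasSum_intervalIntegral_of_norm_le (a := 0) (b := π)
    (F := fun i θ => κ ^ j i * (2 * Real.cos (k * θ) * Real.cos (j i * θ)))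
    (c := fun i => κ ^ j i * 2) (fun i => by fun_prop) (fun i θ => ?bound)
    (hgeom.summable.mul_right 2) fun θ =>
      ((hasSum_cosKernel hκ N θ).mul_left (2 * Real.cos (k * θ))).congr_fun fun i => by ring
  case bound =>
    rw [norm_mul, Real.norm_of_nonneg (zpow_nonneg (by linarith) _)]
    gcongr
    rw [norm_mul, norm_mul, Real.norm_two, Real.norm_eq_abs, Real.norm_eq_abs]
    nlinarith [Real.abs_cos_le_one (k * θ), Real.abs_cos_le_one (j i * θ),
      abs_nonneg (Real.cos (k * θ)), abs_nonneg (Real.cos (j i * θ))]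
  have hcoeff : HasSum
      (fun i => κ ^ j i * ((if j i = k then π else 0) + (if j i = -k then π else 0)))
      (π * cosKernelCoeff κ N k) := by
    convert (hasSum_ite_sub_eq N k (κ ^ k * π)).add (hasSum_ite_sub_eq N (-k) (κ ^ (-k) * π))
      using 1
    · ext i
      simp only [j, mul_add, mul_ite, mul_zero]
      congr 1 <;> split_ifs with h <;> simp only [h]
    · simp only [cosKernelCoeff, mul_add, mul_ite, mul_zero]
      split_ifs <;> ring
  simp only [integral_const_mul, integral_two_mul_cos_mul_cos] at hseries
  exact hseries.unique hcoeff

theorem norm_exp_intCast_mul_ofReal_mul_I (n : ℤ) (θ : ℝ) : ‖exp (n * θ * I)‖ = 1 := by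
  rw [← ofReal_intCast, ← ofReal_mul, norm_exp_ofReal_mul_I]

theorem hasSum_farField {a : ℤ → ℂ} (ha : Summable (‖a ·‖)) (θ : ℝ) :
    HasSum (fun n : ℤ => a n * exp (n * θ * I)) (farField a θ) :=
  (Summable.of_norm (by simpa [norm_exp_intCast_mul_ofReal_mul_I] using ha)).hasSum

theorem hasSum_farField_mul_farField_neg {a b : ℤ → ℂ} (ha : Summable (‖a ·‖))
    (hb : Summable (‖b ·‖)) (θ : ℝ) :
    HasSum (fun p : ℤ × ℤ => a p.1 * b p.2 * exp (((p.1 - p.2 : ℤ) : ℂ) * θ * I))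
      (farField a θ * farField b (-θ)) := by
  have hnorm : ∀ (c : ℤ → ℂ) (x : ℝ),
      Summable (fun n : ℤ => ‖c n * exp (n * x * I)‖) ↔ Summable (‖c ·‖) := fun c x => by
    simp only [norm_mul, norm_exp_intCast_mul_ofReal_mul_I, mul_one]
  have hsummable := summable_mul_of_summable_norm ((hnorm a θ).mpr ha) ((hnorm b (-θ)).mpr hb)
  have hprod := (hasSum_farField ha θ).mul (hasSum_farField hb (-θ)) hsummable
  refine hprod.congr_fun fun p => ?_
  rw [mul_mul_mul_comm, ← exp_add]
  push_cast
  ring_nf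

theorem hasSum_farField_mul_farField_neg_add {B C : ℤ → ℂ} (hB : Summable (‖B ·‖))
    (hC : Summable (‖C ·‖)) (θ : ℝ) :
    HasSum (fun p : ℤ × ℤ => B p.1 * C p.2 * ((2 * Real.cos ((p.1 - p.2 : ℤ) * θ) : ℝ) : ℂ))
      (farField B θ * farField C (-θ) + farField C θ * farField B (-θ)) := by
  have hswap := (Equiv.prodComm ℤ ℤ).hasSum_iff.mpr (hasSum_farField_mul_farField_neg hC hB θ)
  refine ((hasSum_farField_mul_farField_neg hB hC θ).add hswap).congr_fun fun p => ?_
  simp only [Function.comp_apply, Equiv.prodComm_apply, Prod.fst_swap, Prod.snd_swap]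
  push_cast
  rw [two_cos]
  ring_nf

theorem integral_farField_mul_cosKernel {κ : ℝ} (hκ : 1 < κ) {B C : ℤ → ℂ}
    (hB : Summable (‖B ·‖)) (hC : Summable (‖C ·‖)) (N : ℕ) :
    ∫ θ in (0 : ℝ)..π,
        (farField B θ * farField C (-θ) + farField C θ * farField B (-θ)) * (cosKernel κ N θ : ℂ)
      = π * ∑' p : ℤ × ℤ, (cosKernelCoeff κ N (p.1 - p.2) : ℂ) * B p.1 * C p.2 := by
  set M := κ ^ N * ((κ + 1) / (κ - 1) ^ 2)
  set F : ℤ × ℤ → ℝ → ℂ := fun p θ =>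
    B p.1 * C p.2 * ((2 * Real.cos ((p.1 - p.2 : ℤ) * θ) * cosKernel κ N θ : ℝ) : ℂ)
  have hcont : ∀ p, Continuous (F p) := fun p => by
    have := continuous_cosKernel hκ N
    fun_prop
  have hbound : ∀ p θ, ‖F p θ‖ ≤ ‖B p.1‖ * ‖C p.2‖ * (2 * M) := fun p θ => by
    rw [norm_mul, norm_mul, norm_real, Real.norm_eq_abs, abs_mul, abs_mul, abs_two]
    have := abs_cosKernel_le hκ N θ
    gcongr
    nlinarith [Real.abs_cos_le_one ((p.1 - p.2 : ℤ) * θ), abs_nonneg (cosKernel κ N θ),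
      abs_nonneg (Real.cos ((p.1 - p.2 : ℤ) * θ))]
  have hsummable : Summable fun p : ℤ × ℤ => ‖B p.1‖ * ‖C p.2‖ * (2 * M) :=
    (hB.mul_of_nonneg hC (fun _ => norm_nonneg _) fun _ => norm_nonneg _).mul_right _
  have hpoint : ∀ θ, HasSum (fun p => F p θ)
      ((farField B θ * farField C (-θ) + farField C θ * farField B (-θ)) * (cosKernel κ N θ : ℂ)) :=
    fun θ => ((hasSum_farField_mul_farField_neg_add hB hC θ).mul_right _).congr_fun fun p => by
      simp only [F]
      push_cast
      ring
  have hseries := hasSum_intervalIntegral_of_norm_le (a := 0) (b := π) hcont hbound hsummable hpoint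
  simp only [F, intervalIntegral.integral_const_mul, intervalIntegral.integral_ofReal,
    integral_two_mul_cos_mul_cosKernel hκ] at hseries
  rw [← hseries.tsum_eq, ← tsum_mul_left]
  exact tsum_congr fun p => by push_cast; ring

theorem summable_norm_of_summable_norm_mul_pow_natAbs {E : Type*} [SeminormedAddCommGroup E]
    {κ : ℝ} (hκ : 1 ≤ κ) {a : ℤ → E} (ha : Summable fun n => ‖a n‖ * κ ^ n.natAbs) :
    Summable (‖a ·‖) :=
  ha.of_nonneg_of_le (fun _ => norm_nonneg _)
    fun _ => le_mul_of_one_le_right (norm_nonneg _) (one_le_pow₀ hκ)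

theorem pow_natAbs_sub_le {κ : ℝ} (hκ : 1 ≤ κ) (m n : ℤ) :
    κ ^ (m - n).natAbs ≤ κ ^ m.natAbs * κ ^ n.natAbs := by
  rw [← pow_add]
  exact pow_le_pow_right₀ hκ (Int.natAbs_sub_le m n)

theorem norm_ofReal_mul_mul_le {κ c x : ℝ} (hκ : 1 ≤ κ) {B C : ℤ → ℂ} {m n : ℤ}
    (hx : |x| ≤ c * κ ^ (m - n).natAbs) :
    ‖(x : ℂ) * B m * C n‖ ≤ c * ((‖B m‖ * κ ^ m.natAbs) * (‖C n‖ * κ ^ n.natAbs)) := by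
  have hc : 0 ≤ c := nonneg_of_mul_nonneg_left ((abs_nonneg x).trans hx) (by positivity)
  have hpow := pow_natAbs_sub_le hκ m n
  rw [norm_mul, norm_mul, norm_real, Real.norm_eq_abs]
  calc |x| * ‖B m‖ * ‖C n‖ ≤ c * κ ^ (m - n).natAbs * ‖B m‖ * ‖C n‖ := by gcongr
    _ ≤ c * (κ ^ m.natAbs * κ ^ n.natAbs) * ‖B m‖ * ‖C n‖ := by gcongr
    _ = _ := by ring

theorem summable_ofReal_mul_mul {κ c : ℝ} (hκ : 1 ≤ κ) {B C : ℤ → ℂ}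
    (hB : Summable fun n => ‖B n‖ * κ ^ n.natAbs) (hC : Summable fun n => ‖C n‖ * κ ^ n.natAbs)
    {w : ℤ → ℝ} (hw : ∀ k, |w k| ≤ c * κ ^ k.natAbs) :
    Summable fun p : ℤ × ℤ => (w (p.1 - p.2) : ℂ) * B p.1 * C p.2 :=
  Summable.of_norm_bounded
    ((hB.mul_of_nonneg hC (fun _ => by positivity) fun _ => by positivity).mul_left c)
    fun _ => norm_ofReal_mul_mul_le hκ (hw _)

theorem abs_cosKernelCoeff_le {κ : ℝ} (hκ : 1 ≤ κ) (N : ℕ) (k : ℤ) :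
    |cosKernelCoeff κ N k| ≤ 2 * κ ^ k.natAbs := by
  have hle : ∀ j : ℤ, j.natAbs = k.natAbs → (if j < N then κ ^ j else 0) ≤ κ ^ k.natAbs :=
    fun j hj => by
      split_ifs
      · rw [← hj, ← zpow_natCast]
        exact zpow_le_zpow_right₀ hκ Int.le_natAbs
      · positivity
  rw [cosKernelCoeff, abs_of_nonneg (by split_ifs <;> positivity)]
  linarith [hle k rfl, hle (-k) (Int.natAbs_neg k)]

theorem tendsto_cosKernelCoeff (κ : ℝ) (k : ℤ) :
    Tendsto (fun N => cosKernelCoeff κ N k) atTop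
      (nhds (κ ^ (-(k.natAbs : ℤ)) + κ ^ k.natAbs)) := by
  have hlim : κ ^ k + κ ^ (-k) = κ ^ (-(k.natAbs : ℤ)) + κ ^ k.natAbs := by
    obtain ⟨n, rfl | rfl⟩ := Int.eq_nat_or_neg k
    · rw [Int.natAbs_natCast, zpow_natCast, add_comm]
    · rw [Int.natAbs_neg, Int.natAbs_natCast, neg_neg, zpow_natCast]
  rw [← hlim]
  refine tendsto_const_nhds.congr' ((eventually_gt_atTop k.natAbs).mono fun N hN => ?_)
  simp only [cosKernelCoeff, if_pos (show k < N by omega), if_pos (show -k < N by omega)]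

theorem tendsto_tsum_cosKernelCoeff_mul_mul {κ : ℝ} (hκ : 1 ≤ κ) {B C : ℤ → ℂ}
    (hB : Summable fun n => ‖B n‖ * κ ^ n.natAbs) (hC : Summable fun n => ‖C n‖ * κ ^ n.natAbs) :
    Tendsto (fun N : ℕ => ∑' p : ℤ × ℤ, (cosKernelCoeff κ N (p.1 - p.2) : ℂ) * B p.1 * C p.2)
      atTop (nhds ((∑' p : ℤ × ℤ, ((κ ^ (-((p.1 - p.2).natAbs : ℤ)) : ℝ) : ℂ) * B p.1 * C p.2)
        + ∑' p : ℤ × ℤ, ((κ ^ ((p.1 - p.2).natAbs) : ℝ) : ℂ) * B p.1 * C p.2)) := by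
  have hneg : Summable fun p : ℤ × ℤ =>
      ((κ ^ (-((p.1 - p.2).natAbs : ℤ)) : ℝ) : ℂ) * B p.1 * C p.2 :=
    summable_ofReal_mul_mul hκ hB hC (w := fun k => κ ^ (-(k.natAbs : ℤ))) (c := 1) fun k => by
      rw [abs_of_pos (by positivity), one_mul, zpow_neg, zpow_natCast]
      exact (inv_le_one_of_one_le₀ (one_le_pow₀ hκ)).trans (one_le_pow₀ hκ)
  have hpos : Summable fun p : ℤ × ℤ => ((κ ^ ((p.1 - p.2).natAbs) : ℝ) : ℂ) * B p.1 * C p.2 :=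
    summable_ofReal_mul_mul hκ hB hC (w := fun k => κ ^ k.natAbs) (c := 1) fun k => by
      rw [abs_of_pos (by positivity), one_mul]
  rw [← hneg.tsum_add hpos]
  refine tendsto_tsum_of_dominated_convergence
    ((hB.mul_of_nonneg hC (fun _ => by positivity) fun _ => by positivity).mul_left 2)
    (fun p => ?_) (.of_forall fun N p => norm_ofReal_mul_mul_le hκ (abs_cosKernelCoeff_le hκ N _))
  have hcoeff : Tendsto (fun N => (cosKernelCoeff κ N (p.1 - p.2) : ℂ)) atTop _ :=
    (continuous_ofReal.tendsto _).comp (tendsto_cosKernelCoeff κ (p.1 - p.2))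
  convert (hcoeff.mul_const (B p.1)).mul_const (C p.2) using 2
  rw [ofReal_add, add_mul, add_mul]

theorem pow_div_pi_mul_integral_eq_tsum_cosKernelCoeff {κ : ℝ} (hκ : 1 < κ) {B C : ℤ → ℂ}
    (hB : Summable (‖B ·‖)) (hC : Summable (‖C ·‖)) (N : ℕ) :
    ((κ ^ N / π : ℝ) : ℂ) * ∫ θ in (0 : ℝ)..π,
        (farField B θ * farField C (-θ) + farField C θ * farField B (-θ))
          * (((κ * Real.cos (((N : ℝ) - 1) * θ) - Real.cos ((N : ℝ) * θ))
            / (1 - 2 * κ * Real.cos θ + κ ^ 2) : ℝ) : ℂ)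
      = ∑' p : ℤ × ℤ, (cosKernelCoeff κ N (p.1 - p.2) : ℂ) * B p.1 * C p.2 := by
  have hintegral := integral_farField_mul_cosKernel hκ hB hC N
  unfold cosKernel at hintegral
  rw [ofReal_div, div_eq_inv_mul, mul_assoc, ← integral_const_mul]
  simp_rw [mul_left_comm _ (farField B _ * _ + _), ← ofReal_mul]
  rw [hintegral, ← mul_assoc, inv_mul_cancel₀ (ofReal_ne_zero.mpr Real.pi_ne_zero), one_mul]

/-- Second identity of Lemma 1: under the weighted summability hypotheses, the limit as
`N → ∞` of `(κ^N/π) ∫₀^π G(θ) (κ cos((N-1)θ) - cos(Nθ))/(1 - 2κ cos θ + κ²) dθ` exists and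
equals `∑_{m,n} κ^{-|m-n|} B_m C_n + ∑_{m,n} κ^{|m-n|} B_m C_n`. -/
theorem lemma1_second_identity (B C : ℤ → ℂ) (κ : ℝ) (hκ : 1 < κ)
    (hB : Summable fun n : ℤ => ‖B n‖ * κ ^ n.natAbs)
    (hC : Summable fun n : ℤ => ‖C n‖ * κ ^ n.natAbs)
    (fLT fTL : ℝ → ℂ) (hfLT : fLT = farField B) (hfTL : fTL = farField C)
    (G : ℝ → ℂ) (hG : ∀ θ : ℝ, G θ = fLT θ * fTL (-θ) + fTL θ * fLT (-θ)) :
    Tendsto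
      (fun N : ℕ =>
        ((κ ^ N / π : ℝ) : ℂ)
          * ∫ θ in (0 : ℝ)..π,
              G θ * (((κ * Real.cos (((N : ℝ) - 1) * θ) - Real.cos ((N : ℝ) * θ))
                  / (1 - 2 * κ * Real.cos θ + κ ^ 2) : ℝ) : ℂ))
      atTop
      (nhds ((∑' p : ℤ × ℤ, ((κ ^ (-((p.1 - p.2).natAbs : ℤ)) : ℝ) : ℂ) * B p.1 * C p.2)
        + ∑' p : ℤ × ℤ, ((κ ^ ((p.1 - p.2).natAbs) : ℝ) : ℂ) * B p.1 * C p.2)) := by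
  subst hfLT hfTL
  simp only [hG]
  have hB1 := summable_norm_of_summable_norm_mul_pow_natAbs hκ.le hB
  have hC1 := summable_norm_of_summable_norm_mul_pow_natAbs hκ.le hC
  exact (tendsto_tsum_cosKernelCoeff_mul_mul hκ.le hB hC).congr fun N =>
    (pow_div_pi_mul_integral_eq_tsum_cosKernelCoeff hκ hB1 hC1 N).symm
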